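/- Let Q be a connected Laplacian matrix on V = {0,…,n} with Laplacian lattice L_G. Then the length of the shortest vector of L_G under the simplicial distance function, ν_△(L_G) = min{d_△(0,q) : q ∈ L_G, q ≠ 0} = min{max_i(−q_i) : q ∈ L_G, q ≠ 0}, equals MC_∞(G), the ℓ_∞-minimum cut of the multigraph, i.e. the minimum over all nonempty proper subsets S ⊊ V of μ_∞(S) = max_{j∉S} Σ_{i∈S} b_{ij} (the maximum, over vertices j outside S, of the degree of j across the cut S). -/
import Mathlib


open Finset

/-- A Laplacian matrix of a multigraph on vertex set `Fin (n+1)`: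
symmetric, nonpositive off-diagonal entries, all row sums zero. -/
def IsLaplacian (n : ℕ) (Q : Matrix (Fin (n+1)) (Fin (n+1)) ℤ) : Prop :=
  (∀ i j, Q i j = Q j i) ∧ (∀ i j, i ≠ j → Q i j ≤ 0) ∧ (∀ i, ∑ j, Q i j = 0)

/-- A connected Laplacian matrix: the graph with an edge `{i,j}` whenever
`b_{ij} = -Q i j > 0` is connected. -/
def IsConnectedLaplacian (n : ℕ) (Q : Matrix (Fin (n+1)) (Fin (n+1)) ℤ) : Prop :=
  IsLaplacian n Q ∧ (SimpleGraph.fromRel (fun i j => Q i j ≠ 0)).Connected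

/-- The Laplacian lattice: the subgroup of `ℤ^{n+1}` generated by the rows of `Q`. -/
noncomputable def lapLattice (n : ℕ) (Q : Matrix (Fin (n+1)) (Fin (n+1)) ℤ) :
    AddSubgroup (Fin (n+1) → ℤ) :=
  AddSubgroup.closure (Set.range fun i => Q i)

/-- The hyperplane `H_0 = {x ∈ ℝ^{n+1} : ∑ x i = 0}`. -/
def H0 (n : ℕ) : Set (Fin (n+1) → ℝ) := {x | ∑ i, x i = 0}

/-- The simplicial distance function on `H_0`: `d_△(p,q) = max_i (p i - q i)`. -/
noncomputable def simpDist (n : ℕ) (p q : Fin (n+1) → ℝ) : ℝ :=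
  Finset.univ.sup' Finset.univ_nonempty fun i => p i - q i

/-- Coercion of an integer vector to a real vector. -/
noncomputable def intVec (n : ℕ) (q : Fin (n+1) → ℤ) : Fin (n+1) → ℝ := fun i => (q i : ℝ)

/-- The root lattice `A_n = {x ∈ ℤ^{n+1} : ∑ x i = 0}`. -/
def rootLattice (n : ℕ) : AddSubgroup (Fin (n+1) → ℤ) where
  carrier := {x | ∑ i, x i = 0}
  add_mem' := by
    intro a b ha hb
    simp only [Set.mem_setOf_eq, Pi.add_apply, Finset.sum_add_distrib] at *
    omega
  zero_mem' := by simp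
  neg_mem' := by
    intro a ha
    simp only [Set.mem_setOf_eq, Pi.neg_apply, Finset.sum_neg_distrib] at *
    omega

/-- The `i`-th row of `Q` as a real vector. -/
noncomputable def rowVec (n : ℕ) (Q : Matrix (Fin (n+1)) (Fin (n+1)) ℤ) (i : Fin (n+1)) :
    Fin (n+1) → ℝ := fun j => (Q i j : ℝ)

/-- `u^σ_k = b_{σ(0)} + ⋯ + b_{σ(k)}`. -/
noncomputable def uPerm (n : ℕ) (Q : Matrix (Fin (n+1)) (Fin (n+1)) ℤ)
    (σ : Equiv.Perm (Fin (n+1))) (k : Fin (n+1)) : Fin (n+1) → ℝ :=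
  ∑ j ∈ Finset.Iic k, rowVec n Q (σ j)

/-- The Delaunay polytope of the origin: the union over all permutations `σ`
of the simplices `△_σ = conv{u^σ_0, …, u^σ_n}`. -/
noncomputable def HDel (n : ℕ) (Q : Matrix (Fin (n+1)) (Fin (n+1)) ℤ) :
    Set (Fin (n+1) → ℝ) :=
  ⋃ σ : Equiv.Perm (Fin (n+1)), convexHull ℝ (Set.range (uPerm n Q σ))

/-- `u_S = ∑_{i ∈ S} b_i`, as a real vector. -/
noncomputable def uCut (n : ℕ) (Q : Matrix (Fin (n+1)) (Fin (n+1)) ℤ)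
    (S : Finset (Fin (n+1))) : Fin (n+1) → ℝ := ∑ i ∈ S, rowVec n Q i

/-- Along a walk from inside `S` to outside `S` there is a crossing edge. -/
lemma cross_walk {V : Type*} {G : SimpleGraph V} {S : Finset V} {a b : V}
    (w : G.Walk a b) : a ∈ S → b ∉ S → ∃ i ∈ S, ∃ j, j ∉ S ∧ G.Adj i j := by
  classical
  induction w with
  | nil => intro ha hb; exact absurd ha hb
  | @cons u v w h p ih =>
    intro ha hb
    by_cases hc : v ∈ S
    · exact ih hc hb
    · exact ⟨u, ha, v, hc, h⟩

lemma mem_lapLattice_iff (n : ℕ) (Q : Matrix (Fin (n+1)) (Fin (n+1)) ℤ)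
    (q : Fin (n+1) → ℤ) :
    q ∈ lapLattice n Q ↔ ∃ c : Fin (n+1) → ℤ, ∀ j, q j = ∑ i, c i * Q i j := by
  have h : q ∈ lapLattice n Q ↔ q ∈ Submodule.span ℤ (Set.range fun i => Q i) := by
    rw [lapLattice, ← Submodule.span_int_eq_addSubgroupClosure]
    exact Iff.rfl
  rw [h, Submodule.mem_span_range_iff_exists_fun]
  constructor
  · rintro ⟨c, hc⟩
    exact ⟨c, fun j => by rw [← hc]; simp [Finset.sum_apply]⟩
  · rintro ⟨c, hc⟩
    refine ⟨c, funext fun j => ?_⟩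
    simp [Finset.sum_apply, (hc j).symm]

/-- the length of the shortest vector of the Laplacian lattice of
a connected multigraph under the simplicial distance function equals the
ℓ∞-minimum cut `MC_∞(G) = min_S max_{j ∉ S} Σ_{i ∈ S} b_{ij}`. -/
theorem shortest_vector_eq_ell_infty_min_cut (n : ℕ) (hn : 1 ≤ n)
    (Q : Matrix (Fin (n+1)) (Fin (n+1)) ℤ) (hQ : IsConnectedLaplacian n Q) :
    sInf {c : ℝ | ∃ q ∈ lapLattice n Q, q ≠ 0 ∧ c = simpDist n 0 (intVec n q)} =
      sInf {c : ℝ | ∃ S : Finset (Fin (n+1)), S.Nonempty ∧ S ≠ Finset.univ ∧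
          c = sSup {v : ℝ | ∃ j ∉ S, v = ∑ i ∈ S, -(Q i j : ℝ)}} := by
  obtain ⟨⟨hsym, hoff, hrow⟩, hconn⟩ := hQ
  have hcol : ∀ j, ∑ i, Q i j = 0 := fun j => by
    rw [Finset.sum_congr rfl fun i _ => hsym i j]; exact hrow j
  have hsd : ∀ v : Fin (n+1) → ℝ,
      simpDist n 0 v = Finset.univ.sup' Finset.univ_nonempty (fun i => -(v i)) := by
    intro v
    unfold simpDist
    congr 1
    funext i
    simp
  set A := {c : ℝ | ∃ q ∈ lapLattice n Q, q ≠ 0 ∧ c = simpDist n 0 (intVec n q)} with hA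
  -- the inner set of cut values
  set E : Finset (Fin (n+1)) → Set ℝ :=
    fun S => {v : ℝ | ∃ j ∉ S, v = ∑ i ∈ S, -(Q i j : ℝ)} with hE
  set B := {c : ℝ | ∃ S : Finset (Fin (n+1)), S.Nonempty ∧ S ≠ Finset.univ ∧ c = sSup (E S)}
    with hB
  have hEfin : ∀ S, (E S).Finite := by
    intro S
    apply Set.Finite.subset (Set.finite_range fun j => ∑ i ∈ S, -(Q i j : ℝ))
    rintro v ⟨j, _, rfl⟩; exact ⟨j, rfl⟩
  have hEne : ∀ S : Finset (Fin (n+1)), S ≠ Finset.univ → (E S).Nonempty := by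
    intro S hS
    obtain ⟨j, hj⟩ : ∃ j, j ∉ S := by
      by_contra h; push_neg at h; exact hS (Finset.eq_univ_iff_forall.2 h)
    exact ⟨_, j, hj, rfl⟩
  have hEnonneg : ∀ S : Finset (Fin (n+1)), ∀ v ∈ E S, (0:ℝ) ≤ v := by
    rintro S v ⟨j, hj, rfl⟩
    apply Finset.sum_nonneg
    intro i hi
    have hij : i ≠ j := fun h => hj (h ▸ hi)
    have := hoff i j hij
    simp only [neg_nonneg]
    exact_mod_cast this
  -- Claim 1 : B ⊆ A
  have hBA : B ⊆ A := by
    rintro c ⟨S, hSne, hSuniv, rfl⟩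
    set qZ : Fin (n+1) → ℤ := fun j => ∑ i ∈ S, Q i j with hqZ
    have hqmem : qZ ∈ lapLattice n Q := by
      rw [mem_lapLattice_iff]
      refine ⟨fun i => if i ∈ S then 1 else 0, fun j => ?_⟩
      simp [hqZ, ite_mul, Finset.sum_ite_mem]
    -- crossing edge
    obtain ⟨a, ha⟩ := hSne
    obtain ⟨b, hb⟩ : ∃ b, b ∉ S := by
      by_contra h; push_neg at h; exact hSuniv (Finset.eq_univ_iff_forall.2 h)
    obtain ⟨i0, hi0, j0, hj0, hadj⟩ :=
      (hconn.preconnected a b).elim fun w => cross_walk w ha hb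
    rw [SimpleGraph.fromRel_adj] at hadj
    have hQi0j0 : Q i0 j0 ≠ 0 := by
      rcases hadj.2 with h | h
      · exact h
      · rw [hsym]; exact h
    have hi0j0 : i0 ≠ j0 := hadj.1
    -- qZ j0 < 0
    have hqj0 : qZ j0 < 0 := by
      have : ∑ i ∈ S, Q i j0 < ∑ _i ∈ S, (0:ℤ) := by
        apply Finset.sum_lt_sum
        · intro i hi
          exact hoff i j0 fun h => hj0 (h ▸ hi)
        · exact ⟨i0, hi0, lt_of_le_of_ne (hoff i0 j0 hi0j0) hQi0j0⟩
      simpa using this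
    have hqne : qZ ≠ 0 := by
      intro h
      have := congrFun h j0
      simp only [Pi.zero_apply] at this
      omega
    -- value of simpDist on qZ
    have hcast : ∀ j, -(intVec n qZ j) = ∑ i ∈ S, -(Q i j : ℝ) := by
      intro j
      simp [intVec, hqZ]
    have hMmem := (hEne S hSuniv).csSup_mem (hEfin S)
    have hMub : ∀ v ∈ E S, v ≤ sSup (E S) := fun v hv => le_csSup (hEfin S).bddAbove hv
    have hval : simpDist n 0 (intVec n qZ) = sSup (E S) := by
      rw [hsd]
      apply le_antisymm
      · apply Finset.sup'_le
        intro j _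
        by_cases hjS : j ∈ S
        · -- nonpositive term
          have h1 : (0:ℤ) ≤ qZ j := by
            have hsplit : ∑ i ∈ S, Q i j + ∑ i ∈ Sᶜ, Q i j = 0 := by
              rw [Finset.sum_add_sum_compl]; exact hcol j
            have h2 : ∑ i ∈ Sᶜ, Q i j ≤ 0 := by
              apply Finset.sum_nonpos
              intro i hi
              exact hoff i j fun h => (Finset.mem_compl.1 hi) (h ▸ hjS)
            simp only [hqZ]; omega
          have h3 : -(intVec n qZ j) ≤ 0 := by
            simp only [intVec, neg_nonpos]
            exact_mod_cast h1
          exact h3.trans (hEnonneg S _ hMmem)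
        · rw [hcast j]
          exact hMub _ ⟨j, hjS, rfl⟩
      · obtain ⟨j1, hj1, hj1eq⟩ := hMmem
        rw [hj1eq, ← hcast j1]
        exact Finset.le_sup' (fun i => -(intVec n qZ i)) (Finset.mem_univ j1)
    exact ⟨qZ, hqmem, hqne, hval.symm⟩
  -- Claim 2 : every element of A dominates some element of B
  have hAB : ∀ x ∈ A, ∃ y ∈ B, y ≤ x := by
    rintro x ⟨q, hq, hqne, rfl⟩
    obtain ⟨c, hc⟩ := (mem_lapLattice_iff n Q q).1 hq
    obtain ⟨i0, -, hmin⟩ := Finset.exists_min_image Finset.univ c Finset.univ_nonempty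
    set c' : Fin (n+1) → ℤ := fun i => c i - c i0 with hc'
    have hc'nonneg : ∀ i, 0 ≤ c' i := fun i => by
      simp only [hc', sub_nonneg]; exact hmin i (Finset.mem_univ i)
    have hq' : ∀ j, q j = ∑ i, c' i * Q i j := by
      intro j
      have : ∑ i, c' i * Q i j = ∑ i, c i * Q i j - c i0 * ∑ i, Q i j := by
        rw [Finset.mul_sum, ← Finset.sum_sub_distrib]
        exact Finset.sum_congr rfl fun i _ => by ring
      rw [this, hcol j, hc j]; ring
    set S : Finset (Fin (n+1)) := Finset.univ.filter fun i => 1 ≤ c' i with hS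
    have hSzero : ∀ i, i ∉ S → c' i = 0 := by
      intro i hi
      simp only [hS, Finset.mem_filter, Finset.mem_univ, true_and, not_le] at hi
      have := hc'nonneg i; omega
    have hSuniv : S ≠ Finset.univ := by
      intro h
      have : i0 ∈ S := h ▸ Finset.mem_univ i0
      simp only [hS, Finset.mem_filter, hc'] at this
      omega
    have hSne : S.Nonempty := by
      rw [Finset.nonempty_iff_ne_empty]
      intro h
      apply hqne
      funext j
      rw [Pi.zero_apply, hq' j]
      apply Finset.sum_eq_zero
      intro i _
      have : i ∉ S := h ▸ Finset.notMem_empty i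
      rw [hSzero i this, zero_mul]
    refine ⟨sSup (E S), ⟨S, hSne, hSuniv, rfl⟩, ?_⟩
    obtain ⟨j1, hj1, hj1eq⟩ := (hEne S hSuniv).csSup_mem (hEfin S)
    -- key inequality in ℤ
    have hkey : ∑ i ∈ S, -(Q i j1) ≤ -(q j1) := by
      have h1 : q j1 = ∑ i ∈ S, c' i * Q i j1 := by
        rw [hq' j1, ← Finset.sum_filter_add_sum_filter_not Finset.univ (fun i => 1 ≤ c' i)]
        have h2 : ∑ i ∈ Finset.univ.filter (fun i => ¬ 1 ≤ c' i), c' i * Q i j1 = 0 := by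
          apply Finset.sum_eq_zero
          intro i hi
          have : i ∉ S := by
            simp only [hS, Finset.mem_filter, Finset.mem_univ, true_and] at hi ⊢
            exact hi
          rw [hSzero i this, zero_mul]
        rw [h2, add_zero]
      rw [h1, ← Finset.sum_neg_distrib]
      apply Finset.sum_le_sum
      intro i hi
      have hiS : 1 ≤ c' i := (Finset.mem_filter.1 hi).2
      have hij : i ≠ j1 := fun h => hj1 (h ▸ hi)
      have hb : 0 ≤ -(Q i j1) := by have := hoff i j1 hij; omega
      nlinarith
    rw [hj1eq]
    have hcast : (∑ i ∈ S, -(Q i j1 : ℝ)) = ((∑ i ∈ S, -(Q i j1) : ℤ) : ℝ) := by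
      push_cast; ring_nf
    rw [hcast]
    have hle : ((∑ i ∈ S, -(Q i j1) : ℤ) : ℝ) ≤ -(intVec n q j1) := by
      simp only [intVec]
      exact_mod_cast hkey
    rw [hsd]
    exact hle.trans (Finset.le_sup' (fun i => -(intVec n q i)) (Finset.mem_univ j1))
  -- B is finite and nonempty
  have hBfin : B.Finite := by
    apply Set.Finite.subset (Set.finite_range fun S : Finset (Fin (n+1)) => sSup (E S))
    rintro c ⟨S, _, _, rfl⟩; exact ⟨S, rfl⟩
  have hBne : B.Nonempty := by
    refine ⟨sSup (E {(0 : Fin (n+1))}), {0}, Finset.singleton_nonempty _, ?_, rfl⟩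
    intro h
    have h1 : (1 : Fin (n+1)) ∈ ({(0 : Fin (n+1))} : Finset (Fin (n+1))) :=
      h ▸ Finset.mem_univ 1
    rw [Finset.mem_singleton] at h1
    have : (0 : Fin (n+1)).val = (1 : Fin (n+1)).val := by rw [h1]
    rw [Fin.val_zero, Fin.val_one', Nat.mod_eq_of_lt (by omega)] at this
    omega
  have hBlow : ∀ y ∈ B, sInf B ≤ y := fun y hy => csInf_le hBfin.bddBelow hy
  have hAne : A.Nonempty := ⟨sInf B, hBA (hBne.csInf_mem hBfin)⟩
  have hAbdd : BddBelow A := by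
    refine ⟨sInf B, fun x hx => ?_⟩
    obtain ⟨y, hy, hyx⟩ := hAB x hx
    exact (hBlow y hy).trans hyx
  apply le_antisymm
  · exact csInf_le hAbdd (hBA (hBne.csInf_mem hBfin))
  · apply le_csInf hAne
    intro x hx
    obtain ⟨y, hy, hyx⟩ := hAB x hx
    exact (hBlow y hy).trans hyx
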